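/- arXiv:2107.00011 — 2 statements merged into one kernel-verified Lean document; each statement's English description precedes it below -/
import Mathlib

section
/- For a nilpotent operator Q (Q² = 0) on a finite-dimensional complex inner product space, the kernel of H = QQ† + Q†Q is linearly isomorphic to the quotient ker(Q)/im(Q) (the cohomology of Q). -/
/-!
As `re ⟪H x, x⟫ = ‖Q† x‖² + ‖Q x‖²`, the harmonic space `ker H` is
`ker Q ∩ ker Q† = ker Q ∩ (im Q)ᗮ`. Since `Q² = 0` gives `im Q ≤ ker Q`, this is the orthogonal
complement of `im Q` inside `ker Q`, which has the dimension of `ker Q / im Q`.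
-/

open LinearMap Module Submodule

section

variable {𝕜 E : Type*} [RCLike 𝕜] [NormedAddCommGroup E] [InnerProductSpace 𝕜 E]

theorem Submodule.finrank_quotient_comap_subtype_eq {K R : Submodule 𝕜 E}
    [FiniteDimensional 𝕜 K] (h : R ≤ K) :
    finrank 𝕜 (K ⧸ R.comap K.subtype) = finrank 𝕜 (Rᗮ ⊓ K : Submodule 𝕜 E) := by
  have hquot := (R.comap K.subtype).finrank_quotient_add_finrank
  rw [(comapSubtypeEquivOfLe h).finrank_eq] at hquot
  have horth := finrank_add_inf_finrank_orthogonal h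
  omega

variable [FiniteDimensional 𝕜 E]

theorem LinearMap.re_inner_laplacian_apply_self (A : E →ₗ[𝕜] E) (x : E) :
    RCLike.re (inner 𝕜 ((A ∘ₗ A.adjoint + A.adjoint ∘ₗ A) x) x) =
      ‖A.adjoint x‖ ^ 2 + ‖A x‖ ^ 2 := by
  rw [add_apply, comp_apply, comp_apply, inner_add_left, adjoint_inner_left,
    ← adjoint_inner_right, map_add, inner_self_eq_norm_sq, inner_self_eq_norm_sq]

theorem LinearMap.ker_laplacian (A : E →ₗ[𝕜] E) :
    ker (A ∘ₗ A.adjoint + A.adjoint ∘ₗ A) = (range A)ᗮ ⊓ ker A := by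
  rw [orthogonal_range]
  ext x
  simp only [mem_inf, mem_ker]
  constructor
  · intro hx
    have h := A.re_inner_laplacian_apply_self x
    rw [hx, inner_zero_left, map_zero, eq_comm,
      add_eq_zero_iff_of_nonneg (sq_nonneg _) (sq_nonneg _)] at h
    simpa using h
  · rintro ⟨hadj, hA⟩
    simp [hadj, hA]

end

/-- Hodge theorem: for nilpotent `Q` (`Q² = 0`) on a finite-dimensional complex
inner product space, `ker(QQ† + Q†Q)` is linearly isomorphic to the cohomology
`ker Q / im Q`. -/
theorem ground_states_iso_cohomology
    {V : Type*} [NormedAddCommGroup V] [InnerProductSpace ℂ V]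
    [FiniteDimensional ℂ V]
    (Q H : V →ₗ[ℂ] V) (hQ : Q ∘ₗ Q = 0)
    (hH : H = Q ∘ₗ LinearMap.adjoint Q + LinearMap.adjoint Q ∘ₗ Q) :
    Nonempty (↥(LinearMap.ker H) ≃ₗ[ℂ]
      (↥(LinearMap.ker Q) ⧸
        Submodule.comap (LinearMap.ker Q).subtype (LinearMap.range Q))) := by
  have hrange : range Q ≤ ker Q := range_le_ker_iff.mpr hQ
  rw [hH, ker_laplacian]
  exact ⟨.ofFinrankEq _ _ (finrank_quotient_comap_subtype_eq hrange).symm⟩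
end

section
/- Let Q² = 0 on a finite-dimensional complex inner product space, H = QQ† + Q†Q, and suppose P is a self-adjoint involution (P² = 1) with PQ + QP = 0 (i.e., Q anticommutes with the parity operator P). Then for every eigenvalue E > 0 of H, the map ψ ↦ (1/√E)(Q + Q†)ψ is a linear isomorphism between the (+1)-parity and (−1)-parity subspaces of the E-eigenspace of H; in particular, the E-eigenspace has equal-dimensional bosonic and fermionic parts. -/
/-- Boson-fermion pairing at positive energy: for `Q² = 0`, `H = QQ† + Q†Q`, and
a self-adjoint involution `P` anticommuting with `Q`, the map
`ψ ↦ (1/√E)(Q + Q†)ψ` is a linear isomorphism between the bosonic (`P = +1`) and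
fermionic (`P = -1`) parts of the `E`-eigenspace of `H`, for any `E > 0`;
in particular these parts have equal dimension. -/
theorem positive_energy_boson_fermion_pairing
    {V : Type*} [NormedAddCommGroup V] [InnerProductSpace ℂ V]
    [FiniteDimensional ℂ V]
    (Q H P : V →ₗ[ℂ] V) (hQ : Q ∘ₗ Q = 0)
    (hH : H = Q ∘ₗ LinearMap.adjoint Q + LinearMap.adjoint Q ∘ₗ Q)
    (hP : LinearMap.adjoint P = P) (hP2 : P ∘ₗ P = LinearMap.id)
    (hPQ : P ∘ₗ Q + Q ∘ₗ P = 0)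
    (E : ℝ) (hE : 0 < E) :
    (∃ e : ↥(Module.End.eigenspace H (E : ℂ) ⊓ Module.End.eigenspace P 1) ≃ₗ[ℂ]
          ↥(Module.End.eigenspace H (E : ℂ) ⊓ Module.End.eigenspace P (-1)),
        ∀ ψ, (e ψ : V) = ((Real.sqrt E : ℂ))⁻¹ • ((Q + LinearMap.adjoint Q) (ψ : V)))
    ∧ Module.finrank ℂ
        ↥(Module.End.eigenspace H (E : ℂ) ⊓ Module.End.eigenspace P 1)
      = Module.finrank ℂ
        ↥(Module.End.eigenspace H (E : ℂ) ⊓ Module.End.eigenspace P (-1)) := by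
  set Q' : V →ₗ[ℂ] V := LinearMap.adjoint Q with hQ'def
  set A : V →ₗ[ℂ] V := Q + Q' with hAdef
  have hQ'2 : Q' ∘ₗ Q' = 0 := by
    rw [hQ'def, ← LinearMap.adjoint_comp, hQ, map_zero]
  have hHA : H = A ∘ₗ A := by
    rw [hH, hAdef]
    simp only [LinearMap.add_comp, LinearMap.comp_add, hQ, hQ'2, zero_add, add_zero]
    exact add_comm _ _
  have hPQ' : P ∘ₗ Q' + Q' ∘ₗ P = 0 := by
    have h := congrArg LinearMap.adjoint hPQ
    rw [map_add, LinearMap.adjoint_comp, LinearMap.adjoint_comp, hP, map_zero] at h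
    rw [← hQ'def] at h
    rw [add_comm]; exact h
  have hPA : P ∘ₗ A = -(A ∘ₗ P) := by
    rw [hAdef, LinearMap.comp_add, LinearMap.add_comp]
    have h1 : P ∘ₗ Q = -(Q ∘ₗ P) := eq_neg_of_add_eq_zero_left hPQ
    have h2 : P ∘ₗ Q' = -(Q' ∘ₗ P) := eq_neg_of_add_eq_zero_left hPQ'
    rw [h1, h2]; abel
  have hHapp : ∀ y, H y = A (A y) := fun y => by rw [hHA]; rfl
  have hPAapp : ∀ y, P (A y) = -A (P y) := fun y => by
    have := congrArg (fun f : V →ₗ[ℂ] V => f y) hPA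
    simpa using this
  set c : ℂ := ((Real.sqrt E : ℂ))⁻¹ with hc
  have hEne : (E : ℂ) ≠ 0 := by exact_mod_cast hE.ne'
  have hsq : ((Real.sqrt E : ℂ)) * (Real.sqrt E : ℂ) = (E : ℂ) := by
    norm_cast; exact Real.mul_self_sqrt hE.le
  have hcc : c * c * (E : ℂ) = 1 := by
    rw [hc, ← mul_inv, hsq]; exact inv_mul_cancel₀ hEne
  set T : V →ₗ[ℂ] V := c • A with hT
  have hTapp : ∀ y, T y = c • A y := fun y => rfl
  have hmemH : ∀ x, x ∈ Module.End.eigenspace H (E : ℂ) →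
      T x ∈ Module.End.eigenspace H (E : ℂ) := by
    intro x hx
    rw [Module.End.mem_eigenspace_iff] at hx ⊢
    rw [hTapp, map_smul, hHapp (A x), ← hHapp x, hx, map_smul, smul_comm c]
  have hmemP : ∀ (μ : ℂ) x, P x = μ • x → P (T x) = (-μ) • T x := by
    intro μ x hx
    rw [hTapp, map_smul, hPAapp, hx, map_smul]
    simp [smul_smul, mul_comm]
  have hTT : ∀ x, x ∈ Module.End.eigenspace H (E : ℂ) → T (T x) = x := by
    intro x hx
    rw [Module.End.mem_eigenspace_iff] at hx
    rw [hTapp, hTapp, map_smul, ← hHapp, hx, smul_smul, smul_smul, hcc, one_smul]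
  have key : ∀ (μ : ℂ), ∀ x ∈ Module.End.eigenspace H (E : ℂ) ⊓ Module.End.eigenspace P μ,
      T x ∈ Module.End.eigenspace H (E : ℂ) ⊓ Module.End.eigenspace P (-μ) := by
    intro μ x hx
    obtain ⟨h1, h2⟩ := Submodule.mem_inf.mp hx
    refine Submodule.mem_inf.mpr ⟨hmemH x h1, ?_⟩
    rw [Module.End.mem_eigenspace_iff] at h2 ⊢
    exact hmemP μ x h2
  have hTB : ∀ x ∈ Module.End.eigenspace H (E : ℂ) ⊓ Module.End.eigenspace P 1,
      T x ∈ Module.End.eigenspace H (E : ℂ) ⊓ Module.End.eigenspace P (-1) :=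
    fun x hx => key 1 x hx
  have hTF : ∀ x ∈ Module.End.eigenspace H (E : ℂ) ⊓ Module.End.eigenspace P (-1),
      T x ∈ Module.End.eigenspace H (E : ℂ) ⊓ Module.End.eigenspace P 1 := by
    intro x hx
    have := key (-1) x hx
    simpa using this
  let f := (T.domRestrict
      (Module.End.eigenspace H (E : ℂ) ⊓ Module.End.eigenspace P 1)).codRestrict
      (Module.End.eigenspace H (E : ℂ) ⊓ Module.End.eigenspace P (-1))
      (fun x => hTB x x.2)
  let g := (T.domRestrict
      (Module.End.eigenspace H (E : ℂ) ⊓ Module.End.eigenspace P (-1))).codRestrict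
      (Module.End.eigenspace H (E : ℂ) ⊓ Module.End.eigenspace P 1)
      (fun x => hTF x x.2)
  have hfg : f ∘ₗ g = LinearMap.id := by
    ext x
    show T (T (x : V)) = (x : V)
    exact hTT _ (Submodule.mem_inf.mp x.2).1
  have hgf : g ∘ₗ f = LinearMap.id := by
    ext x
    show T (T (x : V)) = (x : V)
    exact hTT _ (Submodule.mem_inf.mp x.2).1
  refine ⟨⟨LinearEquiv.ofLinear f g hfg hgf, ?_⟩, ?_⟩
  · intro ψ; rfl
  · exact (LinearEquiv.ofLinear f g hfg hgf).finrank_eq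
end
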